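/- arXiv:1611.03434 — 2 statements merged into one kernel-verified Lean document; each statement's English description precedes it below -/
import Mathlib

section
/- For all integers k ≥ 0 and l ≥ 1, the element x^k w^l lies in the image ∂(A) of the map ∂ (viewed as a ℂ-linear endomorphism of A); that is, there exists a ∈ A with ∂(a) = x^k w^l. -/
/-!
With `x = 1 - z w` the disc relation reads `w z = 1 - Q x`, and it gives `w x = Q x w`; also `σ`
fixes `x`. Hence `∂ x = -Q⁻¹ w²`, and the twisted Leibniz rule gives
`∂ (x ^ (n + 1)) = -Q⁻¹ S (n + 1) x ^ n w²` with `S n = ∑ i < n, Q ^ (2 i)`. Applying `∂` to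
`x ^ (n + 1) z w ^ m` yields, up to the factor `Q ^ (-m)`,
`S (n + 2) x ^ (n + 1) w ^ (m + 1) - S (n + 1) x ^ n w ^ (m + 1)`, so induction on `k` (starting
from `∂ (z w ^ m) = Q ^ (-m) w ^ (m + 1)`) works as long as the geometric sums `S (n + 2)` do not
vanish, which is clear for `Q = q² > 0`.
-/

open Finset

section SkewCommute

variable {R A : Type*} [CommSemiring R] [Semiring A] [Algebra R A] {a b : A} {r : R}

theorem mul_pow_eq_smul_pow_mul (h : a * b = r • (b * a)) (k : ℕ) :
    a * b ^ k = r ^ k • (b ^ k * a) := by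
  induction k with
  | zero => simp
  | succ k ih =>
    rw [pow_succ, ← mul_assoc, ih, smul_mul_assoc, mul_assoc, h, mul_smul_comm, smul_smul,
      ← pow_succ, ← mul_assoc, ← pow_succ]

theorem pow_mul_eq_smul_mul_pow (h : a * b = r • (b * a)) (k : ℕ) :
    a ^ k * b = r ^ k • (b * a ^ k) := by
  induction k with
  | zero => simp
  | succ k ih =>
    rw [pow_succ, mul_assoc, h, mul_smul_comm, ← mul_assoc, ih, smul_mul_assoc, smul_smul,
      ← pow_succ', mul_assoc, ← pow_succ]

end SkewCommute

section TwistedLeibniz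

variable {𝕜 A F : Type*} [CommRing 𝕜] [Ring A] [Algebra 𝕜 A] [FunLike F A A] [RingHomClass F A A]
  {σ : F} {D : A →ₗ[𝕜] A}

theorem map_one_eq_zero_of_twisted_leibniz (hD : ∀ a b, D (a * b) = D a * σ b + a * D b) :
    D 1 = 0 := by
  simpa using hD 1 1

theorem map_pow_eq_zero_of_twisted_leibniz (hD : ∀ a b, D (a * b) = D a * σ b + a * D b)
    {w : A} (hw : D w = 0) (m : ℕ) : D (w ^ m) = 0 := by
  induction m with
  | zero => rw [pow_zero, map_one_eq_zero_of_twisted_leibniz hD]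
  | succ m ih => rw [pow_succ, hD, ih, hw, zero_mul, mul_zero, add_zero]

theorem map_pow_succ_of_twisted_leibniz (hD : ∀ a b, D (a * b) = D a * σ b + a * D b)
    {x v : A} {c r : 𝕜} (hσx : σ x = x) (hDx : D x = c • v) (hvx : v * x = r • (x * v)) (n : ℕ) :
    D (x ^ (n + 1)) = (c * ∑ i ∈ range (n + 1), r ^ i) • (x ^ n * v) := by
  induction n with
  | zero => simpa using hDx
  | succ n ih =>
    rw [pow_succ' x (n + 1), hD, ih, map_pow, hσx, hDx, smul_mul_assoc,
      mul_pow_eq_smul_pow_mul hvx, mul_smul_comm, ← mul_assoc, ← pow_succ',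
      geom_sum_succ' (n := n + 1)]
    module

end TwistedLeibniz

namespace QuantumDisc

section Relations

variable {R A : Type*} [CommRing R] [Ring A] [Algebra R A] {Q : R} {z w : A}

theorem mul_eq_one_sub_smul (hzw : w * z - Q • (z * w) = (1 - Q) • 1) :
    w * z = 1 - Q • (1 - z * w) := by
  rw [sub_eq_iff_eq_add] at hzw
  rw [hzw]
  module

theorem mul_one_sub_mul_eq_smul (hzw : w * z - Q • (z * w) = (1 - Q) • 1) :
    w * (1 - z * w) = Q • ((1 - z * w) * w) := by
  rw [mul_sub, mul_one, ← mul_assoc, mul_eq_one_sub_smul hzw, sub_mul, one_mul,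
    smul_mul_assoc, sub_sub_cancel]

theorem sq_mul_eq_sub_smul (hzw : w * z - Q • (z * w) = (1 - Q) • 1) :
    w ^ 2 * z = w - Q ^ 2 • ((1 - z * w) * w) := by
  rw [sq, mul_assoc, mul_eq_one_sub_smul hzw, mul_sub, mul_one, mul_smul_comm,
    mul_one_sub_mul_eq_smul hzw, smul_smul, sq]

end Relations

section Derivation

variable {𝕜 A F : Type*} [Field 𝕜] [Ring A] [Algebra 𝕜 A] [FunLike F A A] [RingHomClass F A A]
  {σ : F} {D : A →ₗ[𝕜] A} {Q : 𝕜} {z w : A}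

theorem apply_one_sub_mul_eq_self (hQ : Q ≠ 0) (hσz : σ z = Q • z) (hσw : σ w = Q⁻¹ • w) :
    σ (1 - z * w) = 1 - z * w := by
  rw [map_sub, map_one, map_mul, hσz, hσw, smul_mul_smul_comm, mul_inv_cancel₀ hQ, one_smul]

theorem apply_one_sub_mul_eq_neg_smul_sq
    (hD : ∀ a b, D (a * b) = D a * σ b + a * D b) (hσw : σ w = Q⁻¹ • w) (hDz : D z = w)
    (hDw : D w = 0) :
    D (1 - z * w) = -Q⁻¹ • w ^ 2 := by
  rw [map_sub, map_one_eq_zero_of_twisted_leibniz hD, hD, hDz, hDw, hσw, mul_zero, add_zero,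
    mul_smul_comm, sq, zero_sub, neg_smul]

theorem smul_apply_mul_pow (hQ : Q ≠ 0)
    (hD : ∀ a b, D (a * b) = D a * σ b + a * D b) (hσw : σ w = Q⁻¹ • w) (hDz : D z = w)
    (hDw : D w = 0) (m : ℕ) :
    Q ^ m • D (z * w ^ m) = w ^ (m + 1) := by
  rw [hD, hDz, map_pow_eq_zero_of_twisted_leibniz hD hDw, mul_zero, add_zero, map_pow, hσw,
    smul_pow, mul_smul_comm, smul_smul, ← mul_pow, mul_inv_cancel₀ hQ, one_pow, one_smul,
    pow_succ']

theorem smul_apply_pow_mul_mul_pow (hQ : Q ≠ 0)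
    (hzw : w * z - Q • (z * w) = (1 - Q) • 1) {x : A} (hx : x = 1 - z * w)
    (hD : ∀ a b, D (a * b) = D a * σ b + a * D b) (hσz : σ z = Q • z) (hσw : σ w = Q⁻¹ • w)
    (hDz : D z = w) (hDw : D w = 0) (n m : ℕ) :
    Q ^ m • D (x ^ (n + 1) * z * w ^ m) =
      (∑ i ∈ range (n + 2), (Q ^ 2) ^ i) • (x ^ (n + 1) * w ^ (m + 1)) -
        (∑ i ∈ range (n + 1), (Q ^ 2) ^ i) • (x ^ n * w ^ (m + 1)) := by
  subst hx
  have hDx := map_pow_succ_of_twisted_leibniz hD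
    (apply_one_sub_mul_eq_self hQ hσz hσw) (apply_one_sub_mul_eq_neg_smul_sq hD hσw hDz hDw)
    (pow_mul_eq_smul_mul_pow (mul_one_sub_mul_eq_smul hzw) 2) n
  have hw2z : (1 - z * w) ^ n * w ^ 2 * z * w ^ m =
      (1 - z * w) ^ n * w ^ (m + 1) - Q ^ 2 • ((1 - z * w) ^ (n + 1) * w ^ (m + 1)) := by
    rw [mul_assoc _ (w ^ 2), sq_mul_eq_sub_smul hzw, mul_sub, sub_mul, mul_smul_comm,
      smul_mul_assoc, ← mul_assoc, ← pow_succ, mul_assoc, mul_assoc, ← pow_succ']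
  rw [mul_assoc, hD, hDx, map_mul, hσz, map_pow, hσw, smul_pow, hD, hDz,
    map_pow_eq_zero_of_twisted_leibniz hD hDw, map_pow, hσw, smul_pow, mul_zero, add_zero]
  simp only [smul_mul_assoc, mul_smul_comm, ← mul_assoc]
  rw [hw2z, mul_assoc _ w, ← pow_succ', geom_sum_succ (n := n + 1)]
  set S := ∑ i ∈ range (n + 1), (Q ^ 2) ^ i
  have hQ1 : Q * Q⁻¹ = 1 := mul_inv_cancel₀ hQ
  have hQm : Q ^ m * Q⁻¹ ^ m = 1 := by rw [← mul_pow, hQ1, one_pow]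
  match_scalars
  · linear_combination -S * hQm - Q ^ m * Q⁻¹ ^ m * S * hQ1
  · linear_combination (Q ^ 2 * S + 1) * hQm + Q ^ m * Q⁻¹ ^ m * Q ^ 2 * S * hQ1

theorem pow_mul_pow_succ_mem_range {x : A} (hQ : Q ≠ 0)
    (hS : ∀ n, ∑ i ∈ range (n + 2), (Q ^ 2) ^ i ≠ 0)
    (hzw : w * z - Q • (z * w) = (1 - Q) • 1) (hx : x = 1 - z * w)
    (hD : ∀ a b, D (a * b) = D a * σ b + a * D b) (hσz : σ z = Q • z) (hσw : σ w = Q⁻¹ • w)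
    (hDz : D z = w) (hDw : D w = 0) (k m : ℕ) :
    x ^ k * w ^ (m + 1) ∈ LinearMap.range D := by
  induction k with
  | zero =>
    rw [pow_zero, one_mul, ← smul_apply_mul_pow hQ hD hσw hDz hDw, ← map_smul]
    exact LinearMap.mem_range_self D _
  | succ n ih =>
    have hsum : (∑ i ∈ range (n + 2), (Q ^ 2) ^ i) • (x ^ (n + 1) * w ^ (m + 1)) =
        D (Q ^ m • (x ^ (n + 1) * z * w ^ m)) +
          (∑ i ∈ range (n + 1), (Q ^ 2) ^ i) • (x ^ n * w ^ (m + 1)) := by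
      rw [map_smul, smul_apply_pow_mul_mul_pow hQ hzw hx hD hσz hσw hDz hDw, sub_add_cancel]
    rw [← Submodule.smul_mem_iff _ (hS n), hsum]
    exact add_mem (LinearMap.mem_range_self D _) (Submodule.smul_mem _ _ ih)

end Derivation

end QuantumDisc

theorem xk_wl_in_image_partial_general
    (q : ℝ) (hq0 : 0 < q)
    {A : Type*} [Ring A] [Algebra ℂ A]
    (z w : A)
    (hzw : w * z - ((q : ℂ) ^ 2) • (z * w) = ((1 : ℂ) - (q : ℂ) ^ 2) • (1 : A))
    (x : A) (hx : x = 1 - z * w)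
    (σ : A ≃ₐ[ℂ] A) (hσz : σ z = ((q : ℂ) ^ 2) • z)
    (hσw : σ w = (((q : ℂ) ^ 2)⁻¹) • w)
    (D : A →ₗ[ℂ] A)
    (hD : ∀ a b : A, D (a * b) = D a * σ b + a * D b)
    (hDz : D z = w) (hDw : D w = 0)
    :
    ∀ k l : ℕ, 1 ≤ l → ∃ a : A, D a = x ^ k * w ^ l := by
  have hQ : (q : ℂ) ^ 2 ≠ 0 := pow_ne_zero 2 (Complex.ofReal_ne_zero.mpr hq0.ne')
  have hS (n : ℕ) : ∑ i ∈ range (n + 2), (((q : ℂ) ^ 2) ^ 2) ^ i ≠ 0 := by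
    have hpos : 0 < ∑ i ∈ range (n + 2), ((q ^ 2) ^ 2) ^ i :=
      geom_sum_pos (by positivity) (by omega)
    exact_mod_cast hpos.ne'
  intro k l hl
  obtain ⟨m, rfl⟩ := Nat.exists_eq_add_of_le' hl
  exact QuantumDisc.pow_mul_pow_succ_mem_range hQ hS hzw hx hD hσz hσw hDz hDw k m

theorem xk_wl_in_image_partial
    (q : ℝ) (hq0 : 0 < q) (hq1 : q < 1)
    {A : Type*} [Ring A] [Algebra ℂ A]
    (z w : A)
    (hzw : w * z - ((q : ℂ) ^ 2) • (z * w) = ((1 : ℂ) - (q : ℂ) ^ 2) • (1 : A))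
    (x : A) (hx : x = 1 - z * w)
    (σ : A ≃ₐ[ℂ] A) (hσz : σ z = ((q : ℂ) ^ 2) • z)
    (hσw : σ w = (((q : ℂ) ^ 2)⁻¹) • w)
    (D : A →ₗ[ℂ] A)
    (hD : ∀ a b : A, D (a * b) = D a * σ b + a * D b)
    (hDz : D z = w) (hDw : D w = 0)
    :
    ∀ k l : ℕ, 1 ≤ l → ∃ a : A, D a = x ^ k * w ^ l :=
  xk_wl_in_image_partial_general q hq0 z w hzw x hx σ hσz hσw D hD hDz hDw
end

section
/- For every integer N ≥ 2, the following identities hold in A: w^N ∂(z^N) = [N]_{q²} (1 − q⁴ ([N]_{q⁴}/[N]_{q²}) x) ∏_{l=3}^{N} (1 − q^{2l} x) w², and ∂(z^N) w^N = [N]_{q²} (1 − q^{−2N+4} ([N]_{q⁴}/[N]_{q²}) x) ∏_{l=0}^{N−3} (1 − q^{−2l} x) w². -/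
/-- The q-integer `[n]_s = 1 + s + ⋯ + s^(n-1)`. -/
noncomputable def qint (s : ℂ) (n : ℕ) : ℂ := ∑ i ∈ Finset.range n, s ^ i

lemma qint_succ (s : ℂ) (n : ℕ) : qint s (n+1) = qint s n + s ^ n :=
  Finset.sum_range_succ _ _

section Helpers
variable {A : Type*} [Ring A] [Algebra ℂ A] (Q : ℂ) (z w x : A)

lemma xz_pow (hxz : x * z = Q • (z * x)) :
    ∀ m, x * z ^ m = Q ^ m • (z ^ m * x) := by
  intro m
  induction m with
  | zero => simp
  | succ m ih =>
    rw [pow_succ', ← mul_assoc, hxz, smul_mul_assoc, mul_assoc, ih]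
    rw [mul_smul_comm, smul_smul, pow_succ', ← mul_assoc]

lemma wx_pow (hwx : w * x = Q • (x * w)) :
    ∀ m, w ^ m * x = Q ^ m • (x * w ^ m) := by
  intro m
  induction m with
  | zero => simp
  | succ m ih =>
    rw [pow_succ, mul_assoc, hwx, mul_smul_comm, ← mul_assoc, ih]
    rw [smul_mul_assoc, smul_smul, mul_assoc, ← pow_succ, ← pow_succ']

lemma w_zpow (hwz : w * z = 1 - Q • x) (hxz : x * z = Q • (z * x)) (m : ℕ) :
    w * z ^ (m+1) = z ^ m * (1 - Q ^ (m+1) • x) := by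
  rw [pow_succ', ← mul_assoc, hwz, sub_mul, one_mul, smul_mul_assoc, xz_pow Q z x hxz,
    mul_sub, mul_one, mul_smul_comm, smul_smul, ← pow_succ']

lemma prodW (hwz : w * z = 1 - Q • x) (hxz : x * z = Q • (z * x)) :
    ∀ m, w ^ m * z ^ m =
      ((List.range m).map (fun l => (1:A) - Q ^ (l+1) • x)).prod := by
  intro m
  induction m with
  | zero => simp
  | succ m ih =>
    rw [pow_succ w, mul_assoc, w_zpow Q z w x hwz hxz m, ← mul_assoc, ih,
      List.range_succ, List.map_append, List.prod_append]
    simp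

lemma prodZ (hQ : Q ≠ 0) (hzw1 : z * w = 1 - x) (hwx : w * x = Q • (x * w)) :
    ∀ m, z ^ m * w ^ m =
      ((List.range m).map (fun l => (1:A) - (Q⁻¹) ^ l • x)).prod := by
  intro m
  induction m with
  | zero => simp
  | succ m ih =>
    have hxw : x * w ^ m = (Q⁻¹) ^ m • (w ^ m * x) := by
      rw [wx_pow Q w x hwx m, smul_smul, ← mul_pow, inv_mul_cancel₀ hQ, one_pow, one_smul]
    rw [pow_succ z, pow_succ', mul_assoc, ← mul_assoc z, hzw1, sub_mul, one_mul,
      hxw, mul_sub, mul_smul_comm, ← mul_assoc, ih, List.range_succ, List.map_append,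
      List.prod_append]
    simp [mul_sub]

lemma pushW (hwx : w * x = Q • (x * w)) (k : ℕ) (c : ℂ) :
    w ^ k * ((1:A) - c • x) = ((1:A) - (Q ^ k * c) • x) * w ^ k := by
  rw [mul_sub, mul_one, sub_mul, one_mul, mul_smul_comm, wx_pow Q w x hwx k,
    smul_smul, smul_mul_assoc, mul_comm c]

lemma pushWS (hwx : w * x = Q • (x * w)) (k : ℕ) (a b : ℂ) :
    w ^ k * (a • (1:A) - b • x) = (a • (1:A) - (Q ^ k * b) • x) * w ^ k := by
  calc w ^ k * (a • (1:A) - b • x)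
      = a • w ^ k - b • (w ^ k * x) := by
        rw [mul_sub, mul_smul_comm, mul_smul_comm, mul_one]
    _ = a • w ^ k - (Q ^ k * b) • (x * w ^ k) := by
        rw [wx_pow Q w x hwx k, smul_smul, mul_comm b]
    _ = (a • (1:A) - (Q ^ k * b) • x) * w ^ k := by
        rw [sub_mul, smul_mul_assoc, smul_mul_assoc, one_mul]

lemma pushWprod (hwx : w * x = Q • (x * w)) (k : ℕ) (f : ℕ → ℂ) :
    ∀ m, w ^ k * ((List.range m).map (fun l => (1:A) - f l • x)).prod =
      ((List.range m).map (fun l => (1:A) - (Q ^ k * f l) • x)).prod * w ^ k := by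
  intro m
  induction m with
  | zero => simp
  | succ m ih =>
    rw [List.range_succ, List.map_append, List.prod_append, List.map_append,
      List.prod_append, ← mul_assoc, ih]
    simp only [List.map_cons, List.map_nil, List.prod_cons, List.prod_nil, mul_one]
    rw [mul_assoc, pushW Q w x hwx k, ← mul_assoc]

lemma commX1 (c : ℂ) : x * ((1:A) - c • x) = ((1:A) - c • x) * x := by
  rw [mul_sub, sub_mul, mul_one, one_mul, mul_smul_comm, smul_mul_assoc]

lemma commXprod (f : ℕ → ℂ) :
    ∀ m, x * ((List.range m).map (fun l => (1:A) - f l • x)).prod =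
      ((List.range m).map (fun l => (1:A) - f l • x)).prod * x := by
  intro m
  induction m with
  | zero => simp
  | succ m ih =>
    rw [List.range_succ, List.map_append, List.prod_append]
    simp only [List.map_cons, List.map_nil, List.prod_cons, List.prod_nil, mul_one]
    rw [← mul_assoc, ih, mul_assoc, commX1 x, ← mul_assoc]

lemma commSprod (f : ℕ → ℂ) (a b : ℂ) (m : ℕ) :
    (a • (1:A) - b • x) * ((List.range m).map (fun l => (1:A) - f l • x)).prod =
      ((List.range m).map (fun l => (1:A) - f l • x)).prod * (a • (1:A) - b • x) := by
  rw [sub_mul, mul_sub, smul_mul_assoc, mul_smul_comm, one_mul, mul_one,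
    smul_mul_assoc, mul_smul_comm, commXprod x f m]

lemma Dpow (σ : A ≃ₐ[ℂ] A) (D : A →ₗ[ℂ] A)
    (hD : ∀ a b : A, D (a * b) = D a * σ b + a * D b)
    (hDz : D z = w) (hσz : σ z = Q • z)
    (hwz : w * z = 1 - Q • x) (hzw1 : z * w = 1 - x)
    (hxz : x * z = Q • (z * x)) :
    ∀ n, D (z ^ (n+2)) =
      z ^ n * ((qint Q (n+2)) • (1:A) - (qint (Q^2) (n+2)) • x) := by
  have hσp : ∀ k, σ (z ^ k) = Q ^ k • z ^ k := fun k => by rw [map_pow, hσz, smul_pow]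
  have hrec : ∀ k, D (z ^ (k+1)) = Q ^ k • (w * z ^ k) + z * D (z ^ k) := fun k => by
    rw [pow_succ', hD, hDz, hσp, mul_smul_comm]
  intro n
  induction n with
  | zero =>
    rw [hrec 1, pow_one, pow_one, hwz, hDz, hzw1]
    simp only [pow_zero, one_mul, qint, Finset.sum_range_succ, Finset.sum_range_zero]
    module
  | succ n ih =>
    rw [show n+1+2 = (n+2)+1 by ring, hrec (n+2), w_zpow Q z w x hwz hxz (n+1), ih,
      ← mul_assoc, ← pow_succ', ← mul_smul_comm, ← mul_add]
    congr 1
    simp only [qint, Finset.sum_range_succ]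
    module

end Helpers

theorem ydy_dyy_identities
    (q : ℝ) (hq0 : 0 < q) (hq1 : q < 1)
    {A : Type*} [Ring A] [Algebra ℂ A]
    (z w : A)
    (hzw : w * z - ((q : ℂ) ^ 2) • (z * w) = ((1 : ℂ) - (q : ℂ) ^ 2) • (1 : A))
    (x : A) (hx : x = 1 - z * w)
    (σ : A ≃ₐ[ℂ] A) (hσz : σ z = ((q : ℂ) ^ 2) • z)
    (hσw : σ w = (((q : ℂ) ^ 2)⁻¹) • w)
    (D : A →ₗ[ℂ] A)
    (hD : ∀ a b : A, D (a * b) = D a * σ b + a * D b)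
    (hDz : D z = w) (hDw : D w = 0)
    (N : ℕ) (hN : 2 ≤ N)
    :
    w ^ N * D (z ^ N) =
      (qint ((q : ℂ) ^ 2) N) •
        (((1 : A) - ((q : ℂ) ^ 4 * qint ((q : ℂ) ^ 4) N / qint ((q : ℂ) ^ 2) N) • x) *
          ((List.range (N - 2)).map (fun l => (1 : A) - ((q : ℂ) ^ (2 * (l + 3))) • x)).prod *
          w ^ 2) ∧
    D (z ^ N) * w ^ N =
      (qint ((q : ℂ) ^ 2) N) •
        (((1 : A) -
            ((((q : ℂ) ^ (2 * (N - 2)))⁻¹) * qint ((q : ℂ) ^ 4) N / qint ((q : ℂ) ^ 2) N) • x) *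
          ((List.range (N - 2)).map (fun l => (1 : A) - (((q : ℂ) ^ (2 * l))⁻¹) • x)).prod *
          w ^ 2) := by
  obtain ⟨n, rfl⟩ : ∃ n, N = n + 2 := ⟨N - 2, by omega⟩
  set Q : ℂ := (q : ℂ) ^ 2 with hQdef
  have hq0' : (q : ℂ) ≠ 0 := by
    exact_mod_cast (ne_of_gt hq0)
  have hQ0 : Q ≠ 0 := pow_ne_zero _ hq0'
  have hzw1 : z * w = 1 - x := by rw [hx]; abel
  have hwz1 : w * z = 1 - Q • x := by
    have h := eq_add_of_sub_eq hzw
    rw [h, hzw1, hx]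
    module
  have hwx : w * x = Q • (x * w) := by
    have h1 : w * x = w - (w * z) * w := by rw [hx, mul_sub, mul_one, mul_assoc]
    rw [h1, hwz1, sub_mul, one_mul, smul_mul_assoc]
    abel
  have hxz : x * z = Q • (z * x) := by
    have h1 : x * z = z - z * (w * z) := by rw [hx, sub_mul, one_mul, mul_assoc]
    rw [h1, hwz1, mul_sub, mul_one, mul_smul_comm]
    abel
  have hA0 : qint Q (n+2) ≠ 0 := by
    have hpos : (0:ℝ) < ∑ i ∈ Finset.range (n+2), (q^2) ^ i :=
      Finset.sum_pos (fun i _ => pow_pos (pow_pos hq0 2) i) ⟨0, by simp⟩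
    have hcast : qint Q (n+2) = ((∑ i ∈ Finset.range (n+2), (q^2) ^ i : ℝ) : ℂ) := by
      rw [qint]; push_cast; rfl
    rw [hcast]
    exact_mod_cast ne_of_gt hpos
  have hq4 : (q:ℂ) ^ 4 = Q ^ 2 := by rw [hQdef]; ring
  set A0 : ℂ := qint Q (n+2) with hA0def
  set B0 : ℂ := qint (Q^2) (n+2) with hB0def
  have hDzN := Dpow Q z w x σ D hD hDz hσz hwz1 hzw1 hxz n
  have hNsub : (n + 2) - 2 = n := by omega
  have hpow : w ^ (n+2) = w ^ 2 * w ^ n := by rw [← pow_add, Nat.add_comm]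
  constructor
  · -- first identity
    have hL : w ^ (n+2) * D (z ^ (n+2)) =
        ((List.range n).map (fun l => (1:A) - (Q^2 * Q^(l+1)) • x)).prod *
          ((A0 • (1:A) - (Q^2 * B0) • x) * w ^ 2) := by
      rw [hDzN, hpow, mul_assoc, ← mul_assoc (w^n), prodW Q z w x hwz1 hxz n,
        ← mul_assoc, pushWprod Q w x hwx 2 (fun l => Q^(l+1)) n, mul_assoc,
        pushWS Q w x hwx 2 A0 B0]
    have hfun : (fun l => (1:A) - ((q:ℂ) ^ (2 * (l + 3))) • x) =
        (fun l => (1:A) - (Q^2 * Q^(l+1)) • x) := by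
      funext l
      congr 2
      rw [hQdef, ← pow_mul, ← pow_mul, ← pow_add]
      congr 1
      ring
    have hs : A0 • ((1:A) - (Q^2 * B0 / A0) • x) = A0 • (1:A) - (Q^2 * B0) • x := by
      rw [smul_sub, smul_smul, mul_div_cancel₀ _ hA0]
    rw [hL, hNsub, hfun, hq4, ← hB0def, ← smul_mul_assoc, ← smul_mul_assoc,
      hs, commSprod x (fun l => Q^2 * Q^(l+1)) A0 (Q^2*B0) n, mul_assoc]
  · -- second identity
    have hmove : (A0 • (1:A) - B0 • x) * w ^ (n+2) =
        w ^ (n+2) * (A0 • (1:A) - ((Q^(n+2))⁻¹ * B0) • x) := by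
      rw [pushWS Q w x hwx (n+2) A0 ((Q^(n+2))⁻¹ * B0), ← mul_assoc,
        mul_inv_cancel₀ (pow_ne_zero _ hQ0), one_mul]
    have hL : D (z ^ (n+2)) * w ^ (n+2) =
        ((List.range n).map (fun l => (1:A) - (Q⁻¹)^l • x)).prod *
          ((A0 • (1:A) - (Q^2 * ((Q^(n+2))⁻¹ * B0)) • x) * w ^ 2) := by
      rw [hDzN, mul_assoc, hmove, ← mul_assoc, pow_add w n 2,
        ← mul_assoc (z^n) (w^n) (w^2), prodZ Q z w x hQ0 hzw1 hwx n, mul_assoc,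
        pushWS Q w x hwx 2 A0 ((Q^(n+2))⁻¹ * B0)]
    have hfun : (fun l => (1:A) - (((q:ℂ) ^ (2 * l))⁻¹) • x) =
        (fun l => (1:A) - (Q⁻¹)^l • x) := by
      funext l
      congr 2
      rw [hQdef, inv_pow, ← pow_mul]
    have hsc : Q^2 * ((Q^(n+2))⁻¹ * B0) = (Q^n)⁻¹ * B0 := by
      have h2 : Q^(n+2) = Q^n * Q^2 := by rw [← pow_add]
      rw [h2, mul_inv, ← mul_assoc, mul_comm (Q^2), mul_assoc ((Q^n)⁻¹), inv_mul_cancel₀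
        (pow_ne_zero _ hQ0), mul_one]
    have hqn : ((q:ℂ) ^ (2 * n))⁻¹ = (Q^n)⁻¹ := by rw [hQdef, ← pow_mul]
    have hs : A0 • ((1:A) - ((Q^n)⁻¹ * B0 / A0) • x) = A0 • (1:A) - ((Q^n)⁻¹ * B0) • x := by
      rw [smul_sub, smul_smul, mul_div_cancel₀ _ hA0]
    rw [hL, hNsub, hfun, hq4, ← hB0def, hqn, hsc, ← smul_mul_assoc,
      ← smul_mul_assoc, hs, commSprod x (fun l => (Q⁻¹)^l) A0 ((Q^n)⁻¹ * B0) n, mul_assoc]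
end
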